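/- Let A be an n-by-N real matrix of rank rho. Then the nuclear norm of A satisfies ||A||_* = min over all factorizations A = P Q^T (P of size n-by-rho, Q of size N-by-rho) of (1/2)(||P||_F^2 + ||Q||_F^2). -/

import Mathlib

/-! The spectral decomposition of `AᵀA` gives `A = W Σ Uᵀ` with `U` orthogonal and `W` having
orthonormal columns on the support of `Σ` and zero columns elsewhere. The balanced factors
`W Σ^{1/2}` and `U Σ^{1/2}`, restricted to the `ρ` nonzero singular values, attain `tr Σ`.
Conversely, for any `A = P Qᵀ`, AM-GM and Bessel's inequality give
`tr Σ = tr (Wᵀ A U) = tr ((WᵀP)(UᵀQ)ᵀ) ≤ ½ (‖WᵀP‖² + ‖UᵀQ‖²) ≤ ½ (‖P‖² + ‖Q‖²)`. -/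

open Matrix

/-- Frobenius norm of a real matrix. -/
noncomputable def frobNorm {m n : ℕ} (M : Matrix (Fin m) (Fin n) ℝ) : ℝ :=
  Real.sqrt (∑ i, ∑ j, (M i j)^2)

/-- Nuclear norm: sum of the singular values of `M`, i.e. of the square roots of the
eigenvalues of `Mᴴ M`. -/
noncomputable def nuclearNorm {m n : ℕ} (M : Matrix (Fin m) (Fin n) ℝ) : ℝ :=
  ∑ i, Real.sqrt ((Matrix.isHermitian_conjTranspose_mul_self M).eigenvalues i)

namespace Matrix

lemma submatrix_mul_submatrix_of_injective {α l m n κ : Type*} [Fintype l] [Fintype κ]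
    [NonUnitalNonAssocSemiring α] (M : Matrix m κ α) (N : Matrix κ n α) {e : l → κ}
    (he : Function.Injective e) (hM : ∀ k ∉ Set.range e, ∀ i, M i k = 0) :
    M.submatrix id e * N.submatrix e id = M * N := by
  ext i j
  simp only [mul_apply, submatrix_apply, id]
  exact Fintype.sum_of_injective e he _ _ (fun k hk => by rw [hM k hk, zero_mul]) fun _ => rfl

lemma col_eq_zero_of_transpose_mul_self_apply_eq_zero {m n : Type*} [Fintype m]
    {M : Matrix m n ℝ} {k : n} (h : (Mᵀ * M) k k = 0) (i : m) : M i k = 0 := by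
  simp only [mul_apply, transpose_apply] at h
  exact mul_self_eq_zero.mp <|
    (Finset.sum_eq_zero_iff_of_nonneg fun j _ => mul_self_nonneg (M j k)).mp h i
      (Finset.mem_univ i)

variable {m n r : Type*} [Fintype m] [Fintype n] [Fintype r]

lemma trace_transpose_mul_self_nonneg (M : Matrix m n ℝ) : 0 ≤ (Mᵀ * M).trace := by
  simpa [conjTranspose_eq_transpose_of_trivial] using
    (posSemidef_conjTranspose_mul_self M).trace_nonneg

lemma trace_transpose_mul_self_submatrix_of_injective {l : Type*} [Fintype l] (M : Matrix m n ℝ)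
    {e : l → n} (he : Function.Injective e) (hM : ∀ k ∉ Set.range e, ∀ i, M i k = 0) :
    ((M.submatrix id e)ᵀ * M.submatrix id e).trace = (Mᵀ * M).trace := by
  rw [trace_mul_comm, transpose_submatrix, submatrix_mul_submatrix_of_injective M Mᵀ he hM,
    trace_mul_comm]

lemma trace_mul_transpose_le (X Y : Matrix m n ℝ) :
    (X * Yᵀ).trace ≤ ((Xᵀ * X).trace + (Yᵀ * Y).trace) / 2 := by
  have hsq := trace_transpose_mul_self_nonneg (X - Y)
  have hXY : (Xᵀ * Y).trace = (X * Yᵀ).trace := by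
    rw [← trace_transpose, transpose_mul, transpose_transpose, trace_mul_comm]
  have hYX : (Yᵀ * X).trace = (X * Yᵀ).trace := trace_mul_comm _ _
  simp only [transpose_sub, Matrix.sub_mul, Matrix.mul_sub, trace_sub] at hsq
  linarith

variable [DecidableEq n]

lemma trace_transpose_mul_self_le_of_gram_eq_diagonal {W : Matrix m n ℝ} {ε : n → ℝ}
    (hW : Wᵀ * W = diagonal ε) (hε : ∀ k, ε k ≤ 1) (P : Matrix m r ℝ) :
    ((Wᵀ * P)ᵀ * (Wᵀ * P)).trace ≤ (Pᵀ * P).trace := by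
  -- Bessel: expand `‖P - W T‖² ≥ 0` and bound `tr (Tᵀ (diagonal ε) T)` by `‖T‖²`.
  set T := Wᵀ * P
  have hres := trace_transpose_mul_self_nonneg (P - W * T)
  have hdefect : 0 ≤ (Tᵀ * diagonal (fun k => 1 - ε k) * T).trace := by
    simpa [conjTranspose_eq_transpose_of_trivial] using
      ((posSemidef_diagonal_iff.mpr fun k => sub_nonneg.mpr (hε k)).conjTranspose_mul_mul_same
        T).trace_nonneg
  have hcross : Pᵀ * (W * T) = Tᵀ * T := by
    rw [← Matrix.mul_assoc, transpose_mul, transpose_transpose]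
  have hcross' : (W * T)ᵀ * P = Tᵀ * T := by
    rw [transpose_mul, Matrix.mul_assoc]
  have hWT : (W * T)ᵀ * (W * T) = Tᵀ * diagonal ε * T := by
    rw [transpose_mul, Matrix.mul_assoc, ← Matrix.mul_assoc Wᵀ, hW, Matrix.mul_assoc]
  have hsub : diagonal (fun k => 1 - ε k) = 1 - diagonal ε := by
    rw [← diagonal_one, diagonal_sub]
  simp only [transpose_sub, Matrix.sub_mul, Matrix.mul_sub, trace_sub, hcross, hcross', hWT]
    at hres
  simp only [hsub, Matrix.mul_sub, Matrix.sub_mul, trace_sub, Matrix.mul_one] at hdefect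
  linarith

lemma trace_transpose_mul_mul_le {l : Type*} [Fintype l] {V : Matrix m n ℝ}
    {W : Matrix r n ℝ} {ε δ : n → ℝ} (hV : Vᵀ * V = diagonal ε) (hε : ∀ k, ε k ≤ 1)
    (hW : Wᵀ * W = diagonal δ) (hδ : ∀ k, δ k ≤ 1) (P : Matrix m l ℝ)
    (Q : Matrix r l ℝ) :
    (Vᵀ * (P * Qᵀ) * W).trace ≤ ((Pᵀ * P).trace + (Qᵀ * Q).trace) / 2 :=
  calc (Vᵀ * (P * Qᵀ) * W).trace = ((Vᵀ * P) * (Wᵀ * Q)ᵀ).trace := by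
        simp only [transpose_mul, transpose_transpose, Matrix.mul_assoc]
    _ ≤ (((Vᵀ * P)ᵀ * (Vᵀ * P)).trace + ((Wᵀ * Q)ᵀ * (Wᵀ * Q)).trace) / 2 :=
        trace_mul_transpose_le _ _
    _ ≤ ((Pᵀ * P).trace + (Qᵀ * Q).trace) / 2 := by
        gcongr
        · exact trace_transpose_mul_self_le_of_gram_eq_diagonal hV hε P
        · exact trace_transpose_mul_self_le_of_gram_eq_diagonal hW hδ Q

/-- Indexed, unsorted, like the eigenvalues of `Aᵀ A`, unlike `LinearMap.singularValues`. -/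
noncomputable def singularValue (A : Matrix m n ℝ) (k : n) : ℝ :=
  √((isHermitian_conjTranspose_mul_self A).eigenvalues k)

lemma singularValue_nonneg (A : Matrix m n ℝ) (k : n) : 0 ≤ singularValue A k :=
  Real.sqrt_nonneg _

lemma rank_eq_card_singularValue_ne_zero (A : Matrix m n ℝ) :
    A.rank = Fintype.card {k // singularValue A k ≠ 0} := by
  have hB := isHermitian_conjTranspose_mul_self A
  rw [← rank_conjTranspose_mul_self, hB.rank_eq_card_non_zero_eigs]
  refine Fintype.card_congr (Equiv.subtypeEquivRight fun k => ?_)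
  rw [singularValue, Real.sqrt_ne_zero',
    ((posSemidef_conjTranspose_mul_self A).eigenvalues_nonneg k).lt_iff_ne']

theorem exists_singular_value_decomposition (A : Matrix m n ℝ) :
    ∃ (W : Matrix m n ℝ) (U : Matrix n n ℝ), A = W * diagonal (singularValue A) * Uᵀ ∧
      Wᵀ * W = diagonal (fun k => singularValue A k * (singularValue A k)⁻¹) ∧
      Uᵀ * U = 1 := by
  set σ := singularValue A
  have hB := isHermitian_conjTranspose_mul_self A
  set U : Matrix n n ℝ := ↑hB.eigenvectorUnitary
  have hU : Uᵀ * U = 1 := by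
    have h := Unitary.coe_star_mul_self hB.eigenvectorUnitary
    rw [star_eq_conjTranspose, conjTranspose_eq_transpose_of_trivial] at h
    exact h
  have hU' : U * Uᵀ = 1 := mul_eq_one_comm.mp hU
  set C := A * U
  have hC : Cᵀ * C = diagonal (fun k => σ k * σ k) := by
    have h := hB.conjStarAlgAut_star_eigenvectorUnitary
    rw [Unitary.conjStarAlgAut_star_apply] at h
    have hσ k : σ k * σ k = hB.eigenvalues k :=
      Real.mul_self_sqrt ((posSemidef_conjTranspose_mul_self A).eigenvalues_nonneg k)
    simp only [star_eq_conjTranspose, conjTranspose_eq_transpose_of_trivial] at h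
    simp only [hσ, C, transpose_mul, Matrix.mul_assoc] at h ⊢
    exact h
  have hCσ : C * diagonal (fun k => (σ k)⁻¹ * σ k) = C := by
    ext i k
    rw [mul_diagonal]
    by_cases hk : σ k = 0
    · have hCk : (Cᵀ * C) k k = 0 := by rw [hC, diagonal_apply_eq, hk, mul_zero]
      rw [col_eq_zero_of_transpose_mul_self_apply_eq_zero hCk i, zero_mul]
    · rw [inv_mul_cancel₀ hk, mul_one]
  -- `(σ k)⁻¹ = 0` when `σ k = 0`, so `W` has zero columns off the support of `σ`.
  refine ⟨C * diagonal (fun k => (σ k)⁻¹), U, ?_, ?_, hU⟩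
  · rw [Matrix.mul_assoc C, diagonal_mul_diagonal, hCσ, Matrix.mul_assoc, hU', Matrix.mul_one]
  · rw [transpose_mul, diagonal_transpose, Matrix.mul_assoc, ← Matrix.mul_assoc Cᵀ, hC,
      diagonal_mul_diagonal, diagonal_mul_diagonal]
    congr 1
    funext k
    by_cases hk : σ k = 0
    · simp [hk]
    · field_simp

lemma sum_singularValue_le_of_eq_mul_transpose {l : Type*} [Fintype l] {A : Matrix m n ℝ}
    {P : Matrix m l ℝ} {Q : Matrix n l ℝ} (hA : A = P * Qᵀ) :
    ∑ k, singularValue A k ≤ ((Pᵀ * P).trace + (Qᵀ * Q).trace) / 2 := by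
  obtain ⟨W, U, hsvd, hW, hU⟩ := exists_singular_value_decomposition A
  have htrace : (Wᵀ * A * U).trace = ∑ k, singularValue A k := by
    conv_lhs => rw [hsvd, Matrix.mul_assoc, Matrix.mul_assoc, hU, Matrix.mul_one,
      ← Matrix.mul_assoc, hW, diagonal_mul_diagonal, trace_diagonal]
    simp_rw [mul_inv_mul_cancel]
  rw [← htrace, hA]
  exact trace_transpose_mul_mul_le hW (fun _ => mul_inv_le_one) (hU.trans diagonal_one.symm)
    (fun _ => le_rfl) P Q

lemma exists_eq_mul_transpose_trace_eq_sum_singularValue {l : Type*} [Fintype l]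
    (A : Matrix m n ℝ) {e : l → n} (he : Function.Injective e)
    (hsupp : ∀ k, singularValue A k ≠ 0 → k ∈ Set.range e) :
    ∃ (P : Matrix m l ℝ) (Q : Matrix n l ℝ), A = P * Qᵀ ∧
      (Pᵀ * P).trace = ∑ k, singularValue A k ∧
      (Qᵀ * Q).trace = ∑ k, singularValue A k := by
  obtain ⟨W, U, hsvd, hW, hU⟩ := exists_singular_value_decomposition A
  set s := fun k => √(singularValue A k)
  have hs k : s k * s k = singularValue A k := Real.mul_self_sqrt (singularValue_nonneg A k)
  have hs0 : ∀ k ∉ Set.range e, s k = 0 := fun k hk => by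
    simp [s, not_ne_iff.mp fun h => hk (hsupp k h)]
  have hW0 : ∀ k ∉ Set.range e, ∀ i, (W * diagonal s) i k = 0 := fun k hk i => by
    simp [hs0 k hk]
  have hU0 : ∀ k ∉ Set.range e, ∀ i, (U * diagonal s) i k = 0 := fun k hk i => by
    simp [hs0 k hk]
  refine ⟨(W * diagonal s).submatrix id e, (U * diagonal s).submatrix id e, ?_, ?_, ?_⟩
  · rw [transpose_submatrix, submatrix_mul_submatrix_of_injective _ _ he hW0,
      transpose_mul, diagonal_transpose, Matrix.mul_assoc, ← Matrix.mul_assoc (diagonal s),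
      diagonal_mul_diagonal, ← Matrix.mul_assoc]
    simp_rw [hs]
    exact hsvd
  · rw [trace_transpose_mul_self_submatrix_of_injective _ he hW0, transpose_mul,
      diagonal_transpose, Matrix.mul_assoc, ← Matrix.mul_assoc Wᵀ, hW, diagonal_mul_diagonal,
      diagonal_mul_diagonal, trace_diagonal]
    exact Finset.sum_congr rfl fun k _ => by rw [mul_left_comm, hs, mul_inv_mul_cancel]
  · rw [trace_transpose_mul_self_submatrix_of_injective _ he hU0, transpose_mul,
      diagonal_transpose, Matrix.mul_assoc, ← Matrix.mul_assoc Uᵀ, hU, Matrix.one_mul,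
      diagonal_mul_diagonal, trace_diagonal]
    simp_rw [hs]

end Matrix

lemma frobNorm_sq {m n : ℕ} (M : Matrix (Fin m) (Fin n) ℝ) :
    frobNorm M ^ 2 = (Mᵀ * M).trace := by
  rw [frobNorm, Real.sq_sqrt (by positivity), Finset.sum_comm]
  simp [trace, mul_apply, sq]

/-- for an `n × N` real matrix `A` of rank `ρ`, the nuclear norm equals
the minimum of `(1/2)(‖P‖_F² + ‖Q‖_F²)` over all factorizations `A = P Qᵀ` with
`P` of size `n × ρ` and `Q` of size `N × ρ`. -/
theorem nuclearNorm_eq_min_factorization (n N ρ : ℕ)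
    (A : Matrix (Fin n) (Fin N) ℝ) (hrank : A.rank = ρ) :
    IsLeast
      { c : ℝ | ∃ (P : Matrix (Fin n) (Fin ρ) ℝ) (Q : Matrix (Fin N) (Fin ρ) ℝ),
          A = P * Qᵀ ∧ c = (1/2) * (frobNorm P ^ 2 + frobNorm Q ^ 2) }
      (nuclearNorm A) := by
  have hnuclear : nuclearNorm A = ∑ k, singularValue A k := rfl
  have hcard : Fintype.card {k // singularValue A k ≠ 0} = ρ := by
    rw [← rank_eq_card_singularValue_ne_zero, hrank]
  set e := (Fintype.equivFinOfCardEq hcard).symm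
  constructor
  · obtain ⟨P, Q, hA, hP, hQ⟩ := exists_eq_mul_transpose_trace_eq_sum_singularValue A
      (Subtype.val_injective.comp e.injective) fun k hk => ⟨e.symm ⟨k, hk⟩, by simp⟩
    exact ⟨P, Q, hA, by rw [frobNorm_sq, frobNorm_sq, hP, hQ, hnuclear]; ring⟩
  · rintro c ⟨P, Q, hA, rfl⟩
    rw [frobNorm_sq, frobNorm_sq, hnuclear]
    linarith [sum_singularValue_le_of_eq_mul_transpose hA]
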